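/- On ℂP^n, let T = √−1 ∂∂̄ log|ξ_n|² = 2π[ξ_n = 0] be the current of integration along the hyperplane {ξ_n = 0} scaled by 2π, and let q = [1:0:⋯:0]. Then for every 0 < r ≤ π/√2, Θ(T,q,r) = 2π; i.e., Θ(T,q,·) is constant in r. By contrast, the modified quantity Θ̃(T,q,r) := (1/((2π)^{n-1} r^{2n-2})) ∫_{B_{ℂP^n}(q,r)} T ∧ ω_{ℂP^n}^{n-1} equals 2π sin^{2n-2}(r/√2)/r^{2n-2}, which is strictly decreasing in r on (0, π/√2]. -/

import Mathlib

noncomputable section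
open Metric MeasureTheory Real Filter Set Topology

instance EuclideanSpace.instMeasurableSpaceComplex {ι : Type*} :
    MeasurableSpace (EuclideanSpace ℂ ι) := MeasurableSpace.comap WithLp.ofLp MeasurableSpace.pi

instance EuclideanSpace.instBorelSpaceComplex {ι : Type*} [Finite ι] :
    BorelSpace (EuclideanSpace ℂ ι) := PiLp.borelSpace (p := 2) (X := fun _ : ι => ℂ)

/-- Lebesgue measure on `ℂⁿ`, i.e. the Riemannian volume `ω_{ℂⁿ}ⁿ/n!` of the flat
Kähler (Euclidean) metric. -/
noncomputable instance EuclideanSpace.instMeasureSpaceComplex {ι : Type*} [Fintype ι] :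
    MeasureSpace (EuclideanSpace ℂ ι) := ⟨Measure.map (WithLp.toLp 2) (Measure.pi fun _ => (volume : Measure ℂ))⟩

/-- The complex projective space `ℂPⁿ = ℙ(ℂ^{n+1})`. -/
abbrev CPn (n : ℕ) := Projectivization ℂ (EuclideanSpace ℂ (Fin (n + 1)))

/-- The geodesic distance of the Fubini–Study metric `ω_{ℂPⁿ}`, normalised so that
`∫_{ℂPⁿ} ω_{ℂPⁿ}ⁿ = (2π)ⁿ` (equivalently `Ric = (n+1) ω_{ℂPⁿ}`).  With this
normalisation the geodesic distance satisfies
`cos²(d(x,y)/√2) = |⟨ξ,η⟩|²/(|ξ|²|η|²)` for any lifts `ξ, η`, hence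
`d(x,y) = √2 · arccos(|⟨ξ,η⟩|/(|ξ||η|))` and `diam(ℂPⁿ) = π/√2`. -/
noncomputable def fsDist {n : ℕ} (x y : CPn n) : ℝ :=
  Real.sqrt 2 * Real.arccos (‖(inner ℂ x.rep y.rep : ℂ)‖ / (‖x.rep‖ * ‖y.rep‖))

/-- The geodesic ball of radius `r` about `q` in `ℂPⁿ` for the Fubini–Study metric. -/
def fsBall {n : ℕ} (q : CPn n) (r : ℝ) : Set (CPn n) := {x | fsDist q x < r}

instance CPn.instMeasurableSpace {n : ℕ} : MeasurableSpace (CPn n) :=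
  MeasurableSpace.map (Projectivization.mk' ℂ) inferInstance

/-- The Fubini–Study volume measure `ω_{ℂPⁿ}ⁿ/n!` on `ℂPⁿ`, with total mass `(2π)ⁿ/n!`:
it is the unique unitarily invariant measure with this normalisation, obtained by pushing
forward the normalised uniform measure on the unit sphere of `ℂ^{n+1}` (realised here as
the normalised restriction of Lebesgue measure to the unit ball, which projects to the
same measure) under the Hopf projection. -/
noncomputable def fsVol (n : ℕ) : Measure (CPn n) :=
  (ENNReal.ofReal ((2 * π) ^ n / n.factorial) *
      (volume (ball (0 : EuclideanSpace ℂ (Fin (n + 1))) 1))⁻¹) •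
    Measure.map (Projectivization.mk' ℂ)
      ((volume.restrict (ball (0 : EuclideanSpace ℂ (Fin (n + 1))) 1 \ {0})).comap
        Subtype.val)

/-- The linear inclusion `ℂᵐ → ℂ^{m+1}` whose image is the hyperplane `{ξ_m = 0}`
(last coordinate zero). -/
def padLast (m : ℕ) : EuclideanSpace ℂ (Fin m) →ₗ[ℂ] EuclideanSpace ℂ (Fin (m + 1)) where
  toFun v := WithLp.toLp 2 (fun i => Fin.lastCases (0 : ℂ) (fun j => v j) i)
  map_add' x y := by
    ext i
    refine Fin.lastCases ?_ (fun j => ?_) i <;>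
      simp [Fin.lastCases_last, Fin.lastCases_castSucc, PiLp.add_apply]
  map_smul' c x := by
    ext i
    refine Fin.lastCases ?_ (fun j => ?_) i <;>
      simp [Fin.lastCases_last, Fin.lastCases_castSucc, PiLp.smul_apply]

lemma padLast_injective (m : ℕ) : Function.Injective (padLast m) := by
  intro x y h
  ext j
  have := congrFun (congrArg
    (fun (v : EuclideanSpace ℂ (Fin (m + 1))) (i : Fin (m + 1)) => v i) h) (Fin.castSucc j)
  simpa [padLast, Fin.lastCases_castSucc] using this

/-- The inclusion `ℂP^{m} ≅ {ξ_{m+1} = 0} ⊆ ℂP^{m+1}` of the hyperplane at the last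
coordinate; it is a totally geodesic isometric embedding for the Fubini–Study metrics. -/
def hyperplaneIncl (m : ℕ) : CPn m → CPn (m + 1) :=
  Projectivization.map (padLast (m + 1)) (padLast_injective (m + 1))

lemma single_zero_one_ne_zero {m : ℕ} :
    (EuclideanSpace.single (0 : Fin (m + 1)) (1 : ℂ)) ≠ 0 := by
  intro h
  have h0 : EuclideanSpace.single (0 : Fin (m + 1)) (1 : ℂ) 0 = 0 := by rw [h]; rfl
  simp [EuclideanSpace.single_apply] at h0

/-- The point `q = [1:0:⋯:0]`. -/
def northPole (m : ℕ) : CPn m :=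
  Projectivization.mk ℂ (EuclideanSpace.single (0 : Fin (m + 1)) (1 : ℂ))
    single_zero_one_ne_zero

/-- The model current `T = √-1 ∂∂̄ log|ξ_n|² = 2π·[ξ_n = 0]` on `ℂPⁿ` — `2π` times the
current of integration along the hyperplane `H = {ξ_n = 0}` (Poincaré–Lelong).  Its trace
measure `T ∧ ω_{ℂPⁿ}^{n-1}` is `2π` times the Fubini–Study volume form `ω^{n-1}` of
`H ≅ ℂP^{n-1}` (restriction of `ω_{ℂPⁿ}` to `H` is `ω_{ℂP^{n-1}}`), i.e.
`2π·(n-1)!` times the pushforward of `fsVol (n-1)` under the inclusion `H ⊆ ℂPⁿ`.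
Here we write `n = m + 1`. -/
noncomputable def modelCurrentTrace (m : ℕ) : Measure (CPn (m + 1)) :=
  (ENNReal.ofReal (2 * π * m.factorial)) • Measure.map (hyperplaneIncl m) (fsVol m)

/-! The Fubini–Study ball of radius `√2 t` about `q = [1:0:⋯:0]` lifts to the cone
`{‖v‖ < 1, cos t ‖v‖ < |v₀|}` in the unit ball of `ℂⁿ⁺¹`.  Slicing along `v₀`, the slice over
`w` is an annulus of area `π (1 - ‖w‖² / sin² t)`, so rescaling `w ↦ w / sin t` shows that the cone
fills the fraction `sin²ⁿ t` of the ball: `fsVol (B(q, √2 t)) = (2π)ⁿ sin²ⁿ t / n!`.  The hyperplane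
`{ξₙ = 0}` contains `q` and its inclusion preserves the distance to `q`, so the trace measure of `T`
gives `B(q, r)` the mass `2π (2π)ⁿ⁻¹ sin²ⁿ⁻² (r/√2)`; this makes `Θ` constant, and `Θ̃` is
`2π (sin (r/√2) / r)²ⁿ⁻²`, strictly decreasing by strict concavity of `sin` on `[0, π]`. -/

open scoped ENNReal

instance EuclideanSpace.isAddHaarMeasure_volume_complex {ι : Type*} [Fintype ι] :
    (volume : Measure (EuclideanSpace ℂ ι)).IsAddHaarMeasure :=
  (EuclideanSpace.equiv ι ℂ).symm.isAddHaarMeasure_map (Measure.pi fun _ => (volume : Measure ℂ))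

lemma EuclideanSpace.finrank_real_complex (ι : Type*) [Fintype ι] :
    Module.finrank ℝ (EuclideanSpace ℂ ι) = 2 * Fintype.card ι := by
  rw [← Module.finrank_mul_finrank ℝ ℂ, Complex.finrank_real_complex, finrank_euclideanSpace]

lemma MeasureTheory.Measure.lintegral_comp_inv_smul {E : Type*} [NormedAddCommGroup E]
    [NormedSpace ℝ E] [MeasurableSpace E] [BorelSpace E] [FiniteDimensional ℝ E]
    (μ : Measure E) [μ.IsAddHaarMeasure] (g : E → ℝ≥0∞) {s : ℝ} (hs : s ≠ 0) :
    ∫⁻ x, g (s⁻¹ • x) ∂μ = ENNReal.ofReal (|s| ^ Module.finrank ℝ E) * ∫⁻ x, g x ∂μ := by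
  rw [← (measurableEmbedding_const_smul₀ (inv_ne_zero hs)).lintegral_map,
    Measure.map_addHaar_smul μ (inv_ne_zero hs), lintegral_smul_measure, smul_eq_mul]
  simp only [inv_pow, inv_inv, abs_pow]

lemma Complex.volume_setOf_lt_norm_sq_lt {l u : ℝ} (hl : 0 ≤ l) :
    volume {z : ℂ | l < ‖z‖ ^ 2 ∧ ‖z‖ ^ 2 < u} = ENNReal.ofReal (π * (u - l)) := by
  rcases le_or_gt u l with hul | hlu
  · have hempty : {z : ℂ | l < ‖z‖ ^ 2 ∧ ‖z‖ ^ 2 < u} = ∅ :=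
      eq_empty_iff_forall_notMem.2 fun z ⟨h₁, h₂⟩ => by linarith
    rw [hempty, measure_empty, eq_comm, ENNReal.ofReal_eq_zero]
    nlinarith [pi_pos]
  have hu : 0 ≤ u := hl.trans hlu.le
  have hset : {z : ℂ | l < ‖z‖ ^ 2 ∧ ‖z‖ ^ 2 < u} = ball 0 √u \ closedBall 0 √l := by
    ext z
    simp only [mem_ofPred_eq, Set.mem_sdiff, mem_ball_zero_iff, mem_closedBall_zero_iff, not_le,
      Real.lt_sqrt (norm_nonneg z)]
    rw [and_comm, ← Real.sqrt_lt_sqrt_iff hl, Real.sqrt_sq (norm_nonneg z)]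
  rw [hset, measure_sdiff (closedBall_subset_ball (Real.sqrt_lt_sqrt hl hlu))
      measurableSet_closedBall.nullMeasurableSet measure_closedBall_lt_top.ne,
    Complex.volume_ball, Complex.volume_closedBall, ← ENNReal.ofReal_pow (Real.sqrt_nonneg u),
    ← ENNReal.ofReal_pow (Real.sqrt_nonneg l), Real.sq_sqrt hu, Real.sq_sqrt hl,
    ← ENNReal.ofReal_coe_nnreal, NNReal.coe_real_pi, ← ENNReal.ofReal_mul hu,
    ← ENNReal.ofReal_mul hl, ← ENNReal.ofReal_sub _ (by positivity)]
  congr 1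
  ring

namespace EuclideanSpace

variable {k : ℕ}

lemma norm_sq_toLp_insertNth_zero (z : ℂ) (w : EuclideanSpace ℂ (Fin k)) :
    ‖(WithLp.toLp 2 (Fin.insertNth 0 z w.ofLp) : EuclideanSpace ℂ (Fin (k + 1)))‖ ^ 2
      = ‖z‖ ^ 2 + ‖w‖ ^ 2 := by
  rw [EuclideanSpace.norm_sq_eq, EuclideanSpace.norm_sq_eq, Fin.sum_univ_succAbove _ 0]
  simp only [Fin.insertNth_apply_same, Fin.insertNth_apply_succAbove]

lemma volume_eq_lintegral_volume_slice {S : Set (EuclideanSpace ℂ (Fin (k + 1)))}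
    (hS : MeasurableSet S) :
    volume S = ∫⁻ w : EuclideanSpace ℂ (Fin k),
      volume {z : ℂ | WithLp.toLp 2 (Fin.insertNth 0 z w.ofLp) ∈ S} := by
  have hS' : MeasurableSet (WithLp.toLp 2 ⁻¹' S) := WithLp.measurable_toLp 2 _ hS
  have hsplit : MeasurePreserving (MeasurableEquiv.piFinSuccAbove (fun _ => ℂ) 0).symm
      (volume.prod volume : Measure (ℂ × (Fin k → ℂ))) volume :=
    (measurePreserving_piFinSuccAbove (fun _ => (volume : Measure ℂ)) 0).symm _
  calc volume S = volume (WithLp.toLp 2 ⁻¹' S : Set (Fin (k + 1) → ℂ)) :=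
        Measure.map_apply (WithLp.measurable_toLp 2 _) hS
    _ = ∫⁻ w : Fin k → ℂ, volume {z : ℂ | WithLp.toLp 2 (Fin.insertNth 0 z w) ∈ S} := by
        rw [← hsplit.measure_preimage hS'.nullMeasurableSet,
          Measure.prod_apply_symm (hsplit.measurable hS')]
        rfl
    _ = _ := (lintegral_map_equiv (fun w : EuclideanSpace ℂ (Fin k) =>
          volume {z : ℂ | WithLp.toLp 2 (Fin.insertNth 0 z w.ofLp) ∈ S})
          (MeasurableEquiv.toLp 2 (Fin k → ℂ))).symm

end EuclideanSpace

/-- The lift to the unit ball of the Fubini–Study ball of radius `√2 arccos c` about `[1:0:⋯:0]`. -/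
def unitBallCone (k : ℕ) (c : ℝ) : Set (EuclideanSpace ℂ (Fin (k + 1))) :=
  {v | ‖v‖ < 1 ∧ c * ‖v‖ < ‖v 0‖}

namespace unitBallCone

variable {k : ℕ} {c s : ℝ}

lemma measurableSet (c : ℝ) : MeasurableSet (unitBallCone k c) :=
  (measurableSet_lt measurable_norm measurable_const).inter
    (measurableSet_lt (measurable_const.mul measurable_norm)
      ((measurable_pi_apply 0).comp (comap_measurable _)).norm)

lemma slice_eq (hc : 0 ≤ c) (hs : 0 < s) (hcs : c ^ 2 + s ^ 2 = 1)
    (w : EuclideanSpace ℂ (Fin k)) :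
    {z : ℂ | WithLp.toLp 2 (Fin.insertNth 0 z w.ofLp) ∈ unitBallCone k c}
      = {z : ℂ | c ^ 2 * ‖w‖ ^ 2 / s ^ 2 < ‖z‖ ^ 2 ∧ ‖z‖ ^ 2 < 1 - ‖w‖ ^ 2} := by
  ext z
  set v : EuclideanSpace ℂ (Fin (k + 1)) := WithLp.toLp 2 (Fin.insertNth 0 z w.ofLp)
  have hv0 : v 0 = z := Fin.insertNth_apply_same (α := fun _ => ℂ) 0 z w.ofLp
  have hv := EuclideanSpace.norm_sq_toLp_insertNth_zero z w
  change ‖v‖ < 1 ∧ c * ‖v‖ < ‖v 0‖ ↔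
    c ^ 2 * ‖w‖ ^ 2 / s ^ 2 < ‖z‖ ^ 2 ∧ ‖z‖ ^ 2 < 1 - ‖w‖ ^ 2
  rw [hv0, ← sq_lt_one_iff₀ (norm_nonneg v), ← pow_lt_pow_iff_left₀ (by positivity)
    (norm_nonneg z) two_ne_zero, mul_pow, hv, div_lt_iff₀ (pow_pos hs 2)]
  constructor <;> rintro ⟨h₁, h₂⟩ <;> constructor <;> nlinarith

lemma volume_eq_lintegral (hc : 0 ≤ c) (hs : 0 < s) (hcs : c ^ 2 + s ^ 2 = 1) :
    volume (unitBallCone k c)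
      = ∫⁻ w : EuclideanSpace ℂ (Fin k), ENNReal.ofReal (π * (1 - ‖w‖ ^ 2 / s ^ 2)) := by
  rw [EuclideanSpace.volume_eq_lintegral_volume_slice (measurableSet c)]
  refine lintegral_congr fun w => ?_
  rw [slice_eq hc hs hcs, Complex.volume_setOf_lt_norm_sq_lt (by positivity)]
  congr 2
  field_simp
  linear_combination (-‖w‖ ^ 2) * hcs

lemma volume_zero_eq_volume_ball :
    volume (unitBallCone k 0) = volume (ball (0 : EuclideanSpace ℂ (Fin (k + 1))) 1) := by
  let H : Submodule ℝ (EuclideanSpace ℂ (Fin (k + 1))) :=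
    (LinearMap.ker (EuclideanSpace.proj (𝕜 := ℂ) (0 : Fin (k + 1))).toLinearMap).restrictScalars ℝ
  have hH : H ≠ ⊤ := fun h => by
    simpa [H] using h.ge (Submodule.mem_top (x := EuclideanSpace.single 0 (1 : ℂ)))
  have hcone : unitBallCone k 0 = ball 0 1 \ H := by
    ext v
    simp [unitBallCone, H]
  rw [hcone, measure_sdiff_null (Measure.addHaar_submodule _ H hH)]

lemma volume_eq (hc : 0 ≤ c) (hs : 0 < s) (hcs : c ^ 2 + s ^ 2 = 1) :
    volume (unitBallCone k c)
      = ENNReal.ofReal (s ^ (2 * k)) * volume (ball (0 : EuclideanSpace ℂ (Fin (k + 1))) 1) := by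
  have hscale (w : EuclideanSpace ℂ (Fin k)) : ‖s⁻¹ • w‖ ^ 2 = ‖w‖ ^ 2 / s ^ 2 := by
    rw [norm_smul, norm_inv, Real.norm_of_nonneg hs.le]
    ring
  rw [volume_eq_lintegral hc hs hcs, ← volume_zero_eq_volume_ball,
    volume_eq_lintegral le_rfl one_pos (by norm_num)]
  simp only [← hscale, one_pow, div_one]
  rw [Measure.lintegral_comp_inv_smul volume (fun w => ENNReal.ofReal (π * (1 - ‖w‖ ^ 2)))
    hs.ne', EuclideanSpace.finrank_real_complex, Fintype.card_fin, abs_of_pos hs]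

end unitBallCone

lemma fsDist_mk {n : ℕ} {u v : EuclideanSpace ℂ (Fin (n + 1))} (hu : u ≠ 0) (hv : v ≠ 0) :
    fsDist (Projectivization.mk ℂ u hu) (Projectivization.mk ℂ v hv)
      = √2 * Real.arccos (‖(inner ℂ u v : ℂ)‖ / (‖u‖ * ‖v‖)) := by
  obtain ⟨a, ha⟩ := (Projectivization.mk_eq_mk_iff ℂ _ _ _ hu).1
    (Projectivization.mk_rep (Projectivization.mk ℂ u hu))
  obtain ⟨b, hb⟩ := (Projectivization.mk_eq_mk_iff ℂ _ _ _ hv).1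
    (Projectivization.mk_rep (Projectivization.mk ℂ v hv))
  have ha' : ‖(a : ℂ)‖ ≠ 0 := by simp
  have hb' : ‖(b : ℂ)‖ ≠ 0 := by simp
  have hu' : ‖u‖ ≠ 0 := norm_ne_zero_iff.2 hu
  have hv' : ‖v‖ ≠ 0 := norm_ne_zero_iff.2 hv
  rw [fsDist, ← ha, ← hb, Units.smul_def, Units.smul_def, inner_smul_left, inner_smul_right,
    norm_smul, norm_smul, norm_mul, norm_mul, RCLike.norm_conj]
  congr 2
  field_simp

lemma fsDist_northPole_mk {n : ℕ} {v : EuclideanSpace ℂ (Fin (n + 1))} (hv : v ≠ 0) :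
    fsDist (northPole n) (Projectivization.mk ℂ v hv) = √2 * Real.arccos (‖v 0‖ / ‖v‖) := by
  rw [northPole, fsDist_mk, EuclideanSpace.inner_single_left, PiLp.norm_single]
  simp

lemma measurableSet_fsBall {n : ℕ} (q : CPn n) (r : ℝ) : MeasurableSet (fsBall q r) := by
  let d : {v : EuclideanSpace ℂ (Fin (n + 1)) // v ≠ 0} → ℝ := fun ξ =>
    √2 * Real.arccos (‖(inner ℂ q.rep ξ.1 : ℂ)‖ / (‖q.rep‖ * ‖ξ.1‖))
  have hd : Measurable d := by fun_prop
  have hpre : Projectivization.mk' ℂ ⁻¹' fsBall q r = d ⁻¹' Iio r := by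
    ext ξ
    change fsDist q (Projectivization.mk ℂ ξ.1 ξ.2) < r ↔ d ξ < r
    rw [← Projectivization.mk_rep q, fsDist_mk q.rep_nonzero]
  change MeasurableSet (Projectivization.mk' ℂ ⁻¹' fsBall q r)
  exact hpre ▸ hd measurableSet_Iio

lemma mk_mem_fsBall_northPole_iff {n : ℕ} {t : ℝ} (ht : t ∈ Icc 0 π)
    {v : EuclideanSpace ℂ (Fin (n + 1))} (hv : v ≠ 0) :
    Projectivization.mk ℂ v hv ∈ fsBall (northPole n) (√2 * t) ↔ Real.cos t * ‖v‖ < ‖v 0‖ := by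
  have hv' : 0 < ‖v‖ := norm_pos_iff.2 hv
  have hle : ‖v 0‖ / ‖v‖ ≤ 1 := div_le_one_of_le₀ (PiLp.norm_apply_le v 0) hv'.le
  rw [fsBall, Set.mem_ofPred_eq, fsDist_northPole_mk, mul_lt_mul_iff_right₀ (by positivity),
    ← Real.strictAntiOn_cos.lt_iff_gt ht ⟨Real.arccos_nonneg _, Real.arccos_le_pi _⟩,
    Real.cos_arccos (by linarith [div_nonneg (norm_nonneg (v 0)) hv'.le]) hle, lt_div_iff₀ hv']

lemma CPn.measurable_mk' {n : ℕ} :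
    Measurable (Projectivization.mk' ℂ : {v : EuclideanSpace ℂ (Fin (n + 1)) // v ≠ 0} → CPn n) :=
  fun _ h => h

lemma fsVol_apply {n : ℕ} {s : Set (CPn n)} (hs : MeasurableSet s) :
    fsVol n s = ENNReal.ofReal ((2 * π) ^ n / n.factorial)
      * (volume (ball (0 : EuclideanSpace ℂ (Fin (n + 1))) 1))⁻¹
      * volume (Subtype.val '' (Projectivization.mk' ℂ ⁻¹' s) ∩ (ball 0 1 \ {0})) := by
  have hval : MeasurableEmbedding
      (Subtype.val : {v : EuclideanSpace ℂ (Fin (n + 1)) // v ≠ 0} → _) :=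
    .subtype_coe (measurableSet_singleton 0).compl
  rw [fsVol, Measure.smul_apply, Measure.map_apply CPn.measurable_mk' hs, hval.comap_apply,
    Measure.restrict_apply' (measurableSet_ball.diff (measurableSet_singleton 0)), smul_eq_mul]

lemma val_image_preimage_fsBall_northPole_inter {n : ℕ} {t : ℝ} (ht : t ∈ Icc 0 π) :
    Subtype.val '' (Projectivization.mk' ℂ ⁻¹' fsBall (northPole n) (√2 * t)) ∩ (ball 0 1 \ {0})
      = unitBallCone n (Real.cos t) := by
  ext v
  constructor
  · rintro ⟨⟨⟨w, hw⟩, hmem, rfl⟩, hw1, -⟩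
    exact ⟨mem_ball_zero_iff.1 hw1, (mk_mem_fsBall_northPole_iff ht hw).1 hmem⟩
  · rintro ⟨hv1, hv⟩
    have hv0 : v ≠ 0 := by
      rintro rfl
      simp at hv
    exact ⟨⟨⟨v, hv0⟩, (mk_mem_fsBall_northPole_iff ht hv0).2 hv, rfl⟩,
      mem_ball_zero_iff.2 hv1, hv0⟩

lemma fsVol_fsBall_northPole (n : ℕ) {t : ℝ} (ht : t ∈ Ioc 0 (π / 2)) :
    fsVol n (fsBall (northPole n) (√2 * t))
      = ENNReal.ofReal ((2 * π) ^ n * Real.sin t ^ (2 * n) / n.factorial) := by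
  have hcos : 0 ≤ Real.cos t := Real.cos_nonneg_of_mem_Icc ⟨by linarith [ht.1, pi_pos], ht.2⟩
  have hsin : 0 < Real.sin t := Real.sin_pos_of_pos_of_lt_pi ht.1 (by linarith [ht.2, pi_pos])
  have hball : volume (ball (0 : EuclideanSpace ℂ (Fin (n + 1))) 1) ≠ 0 :=
    (measure_ball_pos volume 0 one_pos).ne'
  rw [fsVol_apply (measurableSet_fsBall _ _),
    val_image_preimage_fsBall_northPole_inter ⟨ht.1.le, by linarith [ht.2, pi_pos]⟩,
    unitBallCone.volume_eq hcos hsin (Real.cos_sq_add_sin_sq t), mul_mul_mul_comm,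
    ENNReal.inv_mul_cancel hball measure_ball_lt_top.ne, mul_one,
    ← ENNReal.ofReal_mul (by positivity)]
  congr 1
  ring

lemma padLast_apply_castSucc {m : ℕ} (v : EuclideanSpace ℂ (Fin m)) (j : Fin m) :
    padLast m v j.castSucc = v j :=
  Fin.lastCases_castSucc (motive := fun _ => ℂ) j

lemma padLast_apply_last {m : ℕ} (v : EuclideanSpace ℂ (Fin m)) : padLast m v (Fin.last m) = 0 :=
  Fin.lastCases_last (motive := fun _ => ℂ)

lemma norm_padLast {m : ℕ} (v : EuclideanSpace ℂ (Fin m)) : ‖padLast m v‖ = ‖v‖ := by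
  rw [EuclideanSpace.norm_eq, EuclideanSpace.norm_eq, Fin.sum_univ_castSucc]
  simp [padLast_apply_castSucc, padLast_apply_last]

lemma CPn.measurable_map {n k : ℕ}
    (f : EuclideanSpace ℂ (Fin (n + 1)) →ₗ[ℂ] EuclideanSpace ℂ (Fin (k + 1)))
    (hf : Function.Injective f) : Measurable (Projectivization.map f hf) := by
  intro s hs
  have hf0 (ξ : {v : EuclideanSpace ℂ (Fin (n + 1)) // v ≠ 0}) : f ξ.1 ≠ 0 :=
    (map_ne_zero_iff f hf).2 ξ.2
  let lift (ξ : {v : EuclideanSpace ℂ (Fin (n + 1)) // v ≠ 0}) :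
      {v : EuclideanSpace ℂ (Fin (k + 1)) // v ≠ 0} := ⟨f ξ.1, hf0 ξ⟩
  have hlift : Measurable lift :=
    (f.continuous_of_finiteDimensional.measurable.comp measurable_subtype_coe).subtype_mk
  have hpre : Projectivization.mk' ℂ ⁻¹' (Projectivization.map f hf ⁻¹' s)
      = lift ⁻¹' (Projectivization.mk' ℂ ⁻¹' s) := by
    ext ξ
    simp only [mem_preimage, Projectivization.mk'_eq_mk, Projectivization.map_mk, lift]
  change MeasurableSet (Projectivization.mk' ℂ ⁻¹' (Projectivization.map f hf ⁻¹' s))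
  exact hpre ▸ hlift hs

lemma hyperplaneIncl_preimage_fsBall_northPole (m : ℕ) (r : ℝ) :
    hyperplaneIncl m ⁻¹' fsBall (northPole (m + 1)) r = fsBall (northPole m) r := by
  ext x
  rw [← Projectivization.mk_rep x]
  change fsDist _ (hyperplaneIncl m _) < r ↔ fsDist _ _ < r
  rw [hyperplaneIncl, Projectivization.map_mk, fsDist_northPole_mk, fsDist_northPole_mk,
    norm_padLast, ← Fin.castSucc_zero, padLast_apply_castSucc]

lemma modelCurrentTrace_fsBall_northPole (m : ℕ) {t : ℝ} (ht : t ∈ Ioc 0 (π / 2)) :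
    modelCurrentTrace m (fsBall (northPole (m + 1)) (√2 * t))
      = ENNReal.ofReal (2 * π * (2 * π) ^ m * Real.sin t ^ (2 * m)) := by
  rw [modelCurrentTrace, Measure.smul_apply,
    Measure.map_apply (show Measurable (hyperplaneIncl m) from CPn.measurable_map _ _)
      (measurableSet_fsBall _ _),
    hyperplaneIncl_preimage_fsBall_northPole, fsVol_fsBall_northPole m ht, smul_eq_mul,
    ← ENNReal.ofReal_mul (by positivity)]
  congr 1
  field_simp

lemma Real.strictAntiOn_sin_div : StrictAntiOn (fun x => Real.sin x / x) (Ioc 0 π) := by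
  intro x hx y hy hxy
  simpa using strictConcaveOn_sin_Icc.secant_strict_mono ⟨le_rfl, pi_pos.le⟩
    (Ioc_subset_Icc_self hx) (Ioc_subset_Icc_self hy) hx.1.ne' hy.1.ne' hxy

lemma Real.strictAntiOn_sin_div_div {c : ℝ} (hc : 0 < c) :
    StrictAntiOn (fun r => Real.sin (r / c) / r) (Ioc 0 (c * π)) := by
  have hmem {r : ℝ} (hr : r ∈ Ioc 0 (c * π)) : r / c ∈ Ioc 0 π :=
    ⟨div_pos hr.1 hc, div_le_of_le_mul₀ hc.le pi_pos.le (by linarith [hr.2])⟩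
  have hrw (r : ℝ) : Real.sin (r / c) / r = Real.sin (r / c) / (r / c) / c := by
    rw [div_div, div_mul_cancel₀ _ hc.ne']
  intro x hx y hy hxy
  simp only [hrw]
  exact div_lt_div_of_pos_right (Real.strictAntiOn_sin_div (hmem hx) (hmem hy)
    (div_lt_div_of_pos_right hxy hc)) hc

lemma div_sqrt_two_mem_Ioc {r : ℝ} (hr : r ∈ Ioc 0 (π / √2)) : r / √2 ∈ Ioc 0 (π / 2) := by
  have hπ : π / √2 / √2 = π / 2 := by rw [div_div, Real.mul_self_sqrt zero_le_two]
  exact ⟨div_pos hr.1 (by positivity), hπ ▸ div_le_div_of_nonneg_right hr.2 (Real.sqrt_nonneg 2)⟩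

lemma sin_div_sqrt_two_pos {r : ℝ} (hr : r ∈ Ioc 0 (π / √2)) : 0 < Real.sin (r / √2) :=
  Real.sin_pos_of_pos_of_lt_pi (div_sqrt_two_mem_Ioc hr).1
    (by linarith [(div_sqrt_two_mem_Ioc hr).2, pi_pos])

lemma toReal_modelCurrentTrace_fsBall_northPole (m : ℕ) {r : ℝ} (hr : r ∈ Ioc 0 (π / √2)) :
    (modelCurrentTrace m (fsBall (northPole (m + 1)) r)).toReal
      = 2 * π * (2 * π) ^ m * Real.sin (r / √2) ^ (2 * m) := by
  conv_lhs => rw [← mul_div_cancel₀ r (Real.sqrt_ne_zero'.2 two_pos)]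
  rw [modelCurrentTrace_fsBall_northPole m (div_sqrt_two_mem_Ioc hr),
    ENNReal.toReal_ofReal (mul_nonneg (by positivity) ((even_two_mul m).pow_nonneg _))]

/-- **the model case.** On `ℂPⁿ` (`n = m+1 ≥ 2`), let
`T = √-1 ∂∂̄ log|ξ_n|² = 2π[ξ_n = 0]` and `q = [1:0:⋯:0]`.  Then for every
`0 < r ≤ π/√2`,
`Θ(T,q,r) = ((2π)^{n-1} sin^{2n-2}(r/√2))⁻¹ ∫_{B(q,r)} T ∧ ω^{n-1} = 2π`
is constant in `r`; by contrast the modified quantity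
`Θ̃(T,q,r) = ((2π)^{n-1} r^{2n-2})⁻¹ ∫_{B(q,r)} T ∧ ω^{n-1}`
equals `2π sin^{2n-2}(r/√2)/r^{2n-2}`, which is strictly decreasing on `(0, π/√2]`. -/
theorem model_current_theta_const_and_tilde_strictAnti (m : ℕ) (hm : 1 ≤ m) :
    (∀ r ∈ Set.Ioc (0 : ℝ) (π / Real.sqrt 2),
      (modelCurrentTrace m (fsBall (northPole (m + 1)) r)).toReal
          / ((2 * π) ^ m * Real.sin (r / Real.sqrt 2) ^ (2 * m)) = 2 * π) ∧
    (∀ r ∈ Set.Ioc (0 : ℝ) (π / Real.sqrt 2),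
      (modelCurrentTrace m (fsBall (northPole (m + 1)) r)).toReal
          / ((2 * π) ^ m * r ^ (2 * m))
        = 2 * π * (Real.sin (r / Real.sqrt 2) ^ (2 * m) / r ^ (2 * m))) ∧
    StrictAntiOn
      (fun r : ℝ => (modelCurrentTrace m (fsBall (northPole (m + 1)) r)).toReal
          / ((2 * π) ^ m * r ^ (2 * m)))
      (Set.Ioc (0 : ℝ) (π / Real.sqrt 2)) := by
  have htilde (r) (hr : r ∈ Ioc (0 : ℝ) (π / √2)) :
      (modelCurrentTrace m (fsBall (northPole (m + 1)) r)).toReal / ((2 * π) ^ m * r ^ (2 * m))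
        = 2 * π * (Real.sin (r / √2) ^ (2 * m) / r ^ (2 * m)) := by
    rw [toReal_modelCurrentTrace_fsBall_northPole m hr]
    field_simp [hr.1.ne']
  refine ⟨fun r hr => ?_, htilde, fun a ha b hb hab => ?_⟩
  · rw [toReal_modelCurrentTrace_fsBall_northPole m hr]
    field_simp [(sin_div_sqrt_two_pos hr).ne']
  · have hsub : Ioc 0 (π / √2) ⊆ Ioc 0 (√2 * π) :=
      Ioc_subset_Ioc_right (div_le_self pi_pos.le Real.one_lt_sqrt_two.le |>.trans
        (le_mul_of_one_le_left pi_pos.le Real.one_lt_sqrt_two.le))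
    have hsin_div := Real.strictAntiOn_sin_div_div (Real.sqrt_pos.2 two_pos) (hsub ha) (hsub hb) hab
    simp only [htilde a ha, htilde b hb, ← div_pow]
    exact mul_lt_mul_of_pos_left (pow_lt_pow_left₀ hsin_div
      (div_pos (sin_div_sqrt_two_pos hb) hb.1).le (by omega)) (by positivity)
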